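/- arXiv:1610.09230 — 2 statements merged into one kernel-verified Lean document; each statement's English description precedes it below -/
import Mathlib

section
/- Let (Pᵢ)_{i ∈ I} be a nonempty family of probability measures on a measurable space (Ω, F), and Ψ : Ω × ℝ^d → ℝ ∪ {-∞} with Ψ(ω, ·) concave for each ω, Ψ ≤ C uniformly, Ψ jointly measurable, and suppose there is h° ∈ ℝ^d with inf_i E^{Pᵢ}[Ψ(h°)] > -∞. Define Φ(h) := inf_{i ∈ I} E^{Pᵢ}[Ψ(h)]. Then Φ^∞(h) = inf_{i ∈ I} E^{Pᵢ}[Ψ^∞(h)] for every h ∈ ℝ^d. -/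
open MeasureTheory Filter
open scoped ENNReal

/-- Concavity for extended-real-valued functions (values in `ℝ ∪ {-∞} ⊆ EReal`). -/
def IsConcaveE {E : Type*} [AddCommGroup E] [Module ℝ E] (f : E → EReal) : Prop :=
  ∀ x y : E, ∀ a b : ℝ, 0 ≤ a → 0 ≤ b → a + b = 1 →
    (a : EReal) * f x + (b : EReal) * f y ≤ f (a • x + b • y)

/-- Horizon (recession) function of `f` with base point `x`:
`f^∞(h) = inf_{n ∈ ℕ+} (1/n) (f (x + n h) - f x)`. -/
noncomputable def hor {E : Type*} [AddCommGroup E] [Module ℝ E]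
    (f : E → EReal) (x h : E) : EReal :=
  ⨅ n : ℕ+, ((n : ℝ)⁻¹ : EReal) * (f (x + (n : ℝ) • h) - f x)

/-- The canonical map `EReal → ℝ≥0∞` (sending `⊤` to `⊤` and negatives to `0`). -/
noncomputable def erealToENNReal (x : EReal) : ℝ≥0∞ :=
  if x = ⊤ then ⊤ else ENNReal.ofReal x.toReal

/-- Expectation of a function `g : Ω → ℝ ∪ {-∞}` bounded above by the constant `C`,
with values in `ℝ ∪ {-∞} ⊆ EReal`: `E[g] = C - ∫⁻ (C - g)`. -/
noncomputable def expE {Ω : Type*} [MeasurableSpace Ω] (P : Measure Ω) (C : ℝ)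
    (g : Ω → EReal) : EReal :=
  (C : EReal) - ENNReal.toEReal (∫⁻ ω, erealToENNReal ((C : EReal) - g ω) ∂P)

/-!
By concavity, the quotients `q n = (Ψ(h° + n h) - Ψ(h°)) / n` decrease in `n` wherever `Ψ(h°)`
is finite, which is `Pᵢ`-a.s. for every `i`; monotone convergence then gives
`E^{Pᵢ}[Ψ^∞(h)] = inf_n E^{Pᵢ}[min (q n) 0]`. With `r = Φ(h°)`, the quotients of `Φ` are
`inf_i (E^{Pᵢ}[Ψ(h° + n h)] - r) / n`, and for each `i` their infimum over `n` is the same: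
`E^{Pᵢ}[Ψ(h° + n h)] ≥ r + n E^{Pᵢ}[min (q n) 0]` bounds it below, while `Ψ ≤ C` and the
monotonicity of `q` give `E^{Pᵢ}[Ψ(h° + k h)] ≤ C + k E^{Pᵢ}[min (q m) 0]` for `k ≥ m`,
an upper bound up to the error `(C - r) / k`.
-/

open Topology

namespace EReal

lemma add_min_sub_zero_le {x y : EReal} (hx : x ≠ ⊤) : x + min (y - x) 0 ≤ y := by
  induction x using EReal.rec with
  | bot => simp
  | top => exact absurd rfl hx
  | coe r =>
    rcases le_total (y - r) 0 with h | h
    · rw [min_eq_left h, add_comm, EReal.sub_add_cancel]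
    · rw [min_eq_right h, add_zero]
      exact (EReal.sub_nonneg (Or.inr (coe_ne_top r)) (Or.inr (coe_ne_bot r))).1 h

lemma le_coe_add_min_sub_zero {x y : EReal} {C : ℝ} (hx : x ≤ C) (hy : y ≤ C) :
    y ≤ C + min (y - x) 0 := by
  rcases le_total (y - x) 0 with h | h
  · rw [min_eq_left h]
    induction x using EReal.rec with
    | bot =>
      rcases eq_or_ne y ⊥ with rfl | hy'
      · exact bot_le
      · simp [EReal.sub_bot hy'] at h
    | top => simp at hx
    | coe r =>
      calc y = r + (y - r) := by rw [add_comm, EReal.sub_add_cancel]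
        _ ≤ C + (y - r) := add_le_add_left (by exact_mod_cast hx) _
  · rwa [min_eq_right h, add_zero]

lemma sub_add_eq_sub_sub {x y : EReal} (z : EReal) (h₁ : x ≠ ⊥ ∨ y ≠ ⊤)
    (h₂ : x ≠ ⊤ ∨ y ≠ ⊥) : z - (x + y) = z - x - y := by
  rw [sub_eq_add_neg, EReal.neg_add h₁ h₂, sub_eq_add_neg, ← add_assoc, sub_eq_add_neg,
    sub_eq_add_neg]

lemma inv_mul_sub_galoisConnection {c : ℝ} (hc : 0 < c) (r : ℝ) :
    GaloisConnection (fun y : EReal => c * y + r) (fun x => (c : EReal)⁻¹ * (x - r)) := by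
  intro y x
  dsimp only
  rw [mul_comm _ (x - r), ← div_eq_mul_inv,
    EReal.le_div_iff_mul_le (by exact_mod_cast hc) (coe_ne_top c),
    EReal.le_sub_iff_add_le (Or.inl (coe_ne_bot r)) (Or.inl (coe_ne_top r)), mul_comm y]

lemma inv_mul_iInf_sub {ι : Sort*} {c : ℝ} (hc : 0 < c) (r : ℝ) (f : ι → EReal) :
    (c : EReal)⁻¹ * ((⨅ i, f i) - r) = ⨅ i, (c : EReal)⁻¹ * (f i - r) :=
  (inv_mul_sub_galoisConnection hc r).u_iInf

end EReal

lemma iInf_inv_mul_sub_eq_iInf {a b : ℕ+ → EReal} {r C : ℝ}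
    (hlow : ∀ n : ℕ+, ((n : ℝ) : EReal) * b n + r ≤ a n)
    (hup : ∀ m k : ℕ+, m ≤ k → a k ≤ C + ((k : ℝ) : EReal) * b m) :
    ⨅ n : ℕ+, ((n : ℝ)⁻¹ : EReal) * (a n - r) = ⨅ n, b n := by
  have hpos : ∀ n : ℕ+, (0 : ℝ) < n := fun n => by positivity
  refine le_antisymm (le_iInf fun m => EReal.le_of_forall_lt_iff_le.1 fun z hz => ?_)
    (iInf_mono fun n => (EReal.inv_mul_sub_galoisConnection (hpos n) r).le_u (hlow n))
  have hbound : ∀ k, m ≤ k →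
      ((k : ℝ) : EReal)⁻¹ * (a k - r) ≤ ((z + (C - r) / k : ℝ) : EReal) := by
    intro k hmk
    calc ((k : ℝ) : EReal)⁻¹ * (a k - r)
        ≤ ((k : ℝ) : EReal)⁻¹ * (((C + k * z : ℝ) : EReal) - r) := by
          gcongr
          refine EReal.sub_le_sub ?_ le_rfl
          calc a k ≤ C + ((k : ℝ) : EReal) * b m := hup m k hmk
            _ ≤ C + ((k : ℝ) : EReal) * z := by gcongr
            _ = ((C + k * z : ℝ) : EReal) := by norm_cast
      _ = ((z + (C - r) / k : ℝ) : EReal) := by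
          rw [← EReal.coe_inv]
          norm_cast
          field_simp
          ring
  have hlim : Tendsto (fun k : ℕ+ => ((z + (C - r) / k : ℝ) : EReal)) atTop (𝓝 (z : EReal)) := by
    refine EReal.tendsto_coe.2 ?_
    simpa using tendsto_const_nhds.add
      (PNat.tendsto_comp_val_iff.2 (tendsto_const_div_atTop_nhds_zero_nat (C - r)))
  exact ge_of_tendsto hlim
    ((eventually_ge_atTop m).mono fun k hk => (iInf_le _ k).trans (hbound k hk))

section Expectation

variable {Ω : Type*} [MeasurableSpace Ω] {P : Measure Ω} {C : ℝ} {g g₁ g₂ u : Ω → EReal}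

/- `erealToENNReal` is definitionally `EReal.toENNReal`, whose API we use from here on. -/
lemma expE_eq (P : Measure Ω) (C : ℝ) (g : Ω → EReal) :
    expE P C g = C - ((∫⁻ ω, ((C : EReal) - g ω).toENNReal ∂P : ℝ≥0∞) : EReal) := rfl

lemma expE_le_coe : expE P C g ≤ C :=
  calc expE P C g ≤ C - 0 := EReal.sub_le_sub le_rfl (EReal.coe_ennreal_nonneg _)
    _ = C := sub_zero _

lemma expE_const_self : expE P C (fun _ => (C : EReal)) = C := by
  simp [expE_eq]

lemma expE_mono_ae (h : ∀ᵐ ω ∂P, g₁ ω ≤ g₂ ω) : expE P C g₁ ≤ expE P C g₂ :=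
  EReal.sub_le_sub le_rfl (EReal.coe_ennreal_le_coe_ennreal_iff.2 (lintegral_mono_ae
    (h.mono fun _ hω => EReal.toENNReal_le_toENNReal (EReal.sub_le_sub le_rfl hω))))

lemma ae_ne_bot_of_expE_ne_bot (hg : AEMeasurable g P) (h : expE P C g ≠ ⊥) :
    ∀ᵐ ω ∂P, g ω ≠ ⊥ := by
  have hint : ∫⁻ ω, ((C : EReal) - g ω).toENNReal ∂P ≠ ⊤ := by
    intro htop
    rw [expE_eq, htop, EReal.coe_ennreal_top, EReal.sub_top] at h
    exact h rfl
  filter_upwards [ae_lt_top' (by fun_prop) hint] with ω hω hbot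
  simp [hbot] at hω

lemma expE_add (hg : ∀ ω, g ω ≤ C) (hu : ∀ ω, u ω ≤ 0) (hum : AEMeasurable u P) :
    expE P C (fun ω => g ω + u ω) = expE P C g + expE P 0 u := by
  have hsplit : ∀ ω, (C : EReal) - (g ω + u ω) = (C - g ω) + (0 - u ω) := fun ω => by
    rw [EReal.sub_add_eq_sub_sub _
      (Or.inr (ne_top_of_le_ne_top EReal.zero_ne_top (hu ω)))
      (Or.inl (ne_top_of_le_ne_top (EReal.coe_ne_top C) (hg ω))), zero_sub, sub_eq_add_neg]
  have hg₀ : ∀ ω, (0 : EReal) ≤ C - g ω := fun ω =>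
    EReal.sub_nonneg (Or.inl (EReal.coe_ne_top C)) (Or.inl (EReal.coe_ne_bot C)) |>.2 (hg ω)
  have hu₀ : ∀ ω, (0 : EReal) ≤ 0 - u ω := fun ω => by
    rw [zero_sub]; exact EReal.neg_nonneg.2 (hu ω)
  simp only [expE_eq, hsplit, EReal.toENNReal_add (hg₀ _) (hu₀ _), EReal.coe_zero]
  rw [lintegral_add_right' _ (by fun_prop), EReal.coe_ennreal_add,
    EReal.sub_add_eq_sub_sub _ (Or.inl (EReal.coe_ennreal_ne_bot _))
      (Or.inr (EReal.coe_ennreal_ne_bot _)), zero_sub,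
    sub_eq_add_neg _ (((∫⁻ _, _ ∂P) : ℝ≥0∞) : EReal)]

lemma expE_const_mul {c : ℝ} (hc : 0 ≤ c) (u : Ω → EReal) :
    expE P 0 (fun ω => c * u ω) = c * expE P 0 u := by
  simp only [expE_eq, EReal.coe_zero, zero_sub, ← mul_neg]
  simp_rw [EReal.toENNReal_mul (EReal.coe_nonneg.2 hc)]
  rw [lintegral_const_mul' _ _ (by simp), EReal.coe_ennreal_mul,
    EReal.coe_toENNReal (EReal.coe_nonneg.2 hc), mul_neg]

lemma expE_zero_min (u : Ω → EReal) : expE P 0 (fun ω => min (u ω) 0) = expE P 0 u := by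
  simp only [expE_eq, EReal.coe_zero, zero_sub]
  congr 3
  funext ω
  rcases le_total (u ω) 0 with h | h
  · rw [min_eq_left h]
  · rw [min_eq_right h, neg_zero, EReal.toENNReal_zero,
      EReal.toENNReal_of_nonpos (by simpa using h)]

lemma expE_iInf_of_antitone {u : ℕ → Ω → EReal} (hum : ∀ n, AEMeasurable (u n) P)
    (hmono : ∀ᵐ ω ∂P, Antitone fun n => u n ω) :
    expE P 0 (fun ω => ⨅ n, u n ω) = ⨅ n, expE P 0 (u n) := by
  have hneg : Antitone fun x : EReal => (-x).toENNReal := fun x y hxy =>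
    EReal.toENNReal_le_toENNReal (EReal.neg_le_neg_iff.2 hxy)
  have hsup : ∀ ω, (-⨅ n, u n ω).toENNReal = ⨆ n, (-u n ω).toENNReal := fun ω =>
    hneg.map_iInf_of_continuousAt (by fun_prop) (by simp)
  simp only [expE_eq, EReal.coe_zero, zero_sub, hsup]
  rw [lintegral_iSup' (fun n => by fun_prop)
    (hmono.mono fun ω hω m n hmn => hneg (hω hmn))]
  exact Antitone.map_ciSup_of_continuousAt
    (continuous_neg.comp continuous_coe_ennreal_ereal).continuousAt
    fun x y hxy => EReal.neg_le_neg_iff.2 (EReal.coe_ennreal_le_coe_ennreal_iff.2 hxy)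

end Expectation

section Horizon

variable {E : Type*} [AddCommGroup E] [Module ℝ E] (f : E → EReal) (x h : E)

noncomputable def horQuot (n : ℕ+) : EReal :=
  ((n : ℝ)⁻¹ : EReal) * (f (x + (n : ℝ) • h) - f x)

lemma hor_eq_iInf_horQuot : hor f x h = ⨅ n, horQuot f x h n := rfl

lemma coe_mul_horQuot (n : ℕ+) :
    ((n : ℝ) : EReal) * horQuot f x h n = f (x + (n : ℝ) • h) - f x := by
  have hn : (0 : ℝ) < n := by positivity
  rw [horQuot, mul_comm _ (f _ - f x), ← div_eq_mul_inv,
    EReal.mul_div_cancel (EReal.coe_ne_bot _) (EReal.coe_ne_top _) (by exact_mod_cast hn.ne')]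

lemma coe_mul_min_horQuot_zero (n : ℕ+) :
    ((n : ℝ) : EReal) * min (horQuot f x h n) 0 = min (f (x + (n : ℝ) • h) - f x) 0 := by
  rw [(monotone_mul_left_of_nonneg (EReal.coe_nonneg.2 (by positivity))).map_min,
    coe_mul_horQuot, mul_zero]

variable {f x}

lemma IsConcaveE.antitone_horQuot (hf : IsConcaveE f) (hx : f x ≠ ⊥) (htop : ∀ y, f y ≠ ⊤) :
    Antitone (horQuot f x h) := by
  intro m n hmn
  have hn : (0 : ℝ) < n := by positivity
  set t : ℝ := m / n
  have hcomb : t • (x + (n : ℝ) • h) + (1 - t) • x = x + (m : ℝ) • h := by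
    match_scalars
    · ring
    · simp only [t, mul_one, div_mul_cancel₀ _ hn.ne']
  have hconc := hf (x + (n : ℝ) • h) x t (1 - t) (by positivity)
    (sub_nonneg.2 ((div_le_one hn).2 (by exact_mod_cast hmn))) (by ring)
  rw [hcomb] at hconc
  obtain ⟨r, hr⟩ : ∃ r : ℝ, f x = r := ⟨_, (EReal.coe_toReal (htop x) hx).symm⟩
  unfold horQuot
  rw [hr] at hconc ⊢
  induction hX : f (x + (n : ℝ) • h) using EReal.rec with
  | bot =>
    rw [EReal.bot_sub, ← EReal.coe_inv, EReal.coe_mul_bot_of_pos (inv_pos.2 hn)]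
    exact bot_le
  | top => exact absurd hX (htop _)
  | coe X =>
    rw [hX] at hconc
    induction hY : f (x + (m : ℝ) • h) using EReal.rec with
    | bot => rw [hY] at hconc; norm_cast at hconc
    | top => exact absurd hY (htop _)
    | coe Y =>
      rw [hY] at hconc
      rw [← EReal.coe_inv, ← EReal.coe_inv]
      norm_cast at hconc ⊢
      calc (n : ℝ)⁻¹ * (X - r) = (m : ℝ)⁻¹ * (t * X + (1 - t) * r - r) := by
            simp only [t]; field_simp; ring
        _ ≤ (m : ℝ)⁻¹ * (Y - r) := by gcongr

end Horizon

section IntegratedHorizon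

variable {Ω : Type*} [MeasurableSpace Ω] {P : Measure Ω} {E : Type*} [AddCommGroup E]
  [Module ℝ E] {Ψ : Ω → E → EReal} {C : ℝ} {x : E}

lemma measurable_horQuot (hmeas : ∀ z, Measurable fun ω => Ψ ω z) (h : E) (n : ℕ+) :
    Measurable fun ω => horQuot (Ψ ω) x h n :=
  ((hmeas _).sub (hmeas x)).const_mul _

lemma expE_hor_eq_iInf (hmeas : ∀ z, Measurable fun ω => Ψ ω z)
    (hconc : ∀ ω, IsConcaveE (Ψ ω)) (htop : ∀ ω z, Ψ ω z ≠ ⊤) (hx : ∀ᵐ ω ∂P, Ψ ω x ≠ ⊥)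
    (h : E) :
    expE P 0 (fun ω => hor (Ψ ω) x h)
      = ⨅ n, expE P 0 (fun ω => min (horQuot (Ψ ω) x h n) 0) := by
  simp_rw [← expE_zero_min (fun ω => hor (Ψ ω) x h), hor_eq_iInf_horQuot, iInf_inf,
    ← Equiv.pnatEquivNat.symm.iInf_comp]
  refine expE_iInf_of_antitone
    (fun n => ((measurable_horQuot hmeas h _).min measurable_const).aemeasurable) ?_
  filter_upwards [hx] with ω hω m n hmn
  exact min_le_min_right _ ((hconc ω).antitone_horQuot h hω (htop ω) (by simpa using hmn))

lemma expE_add_coe_mul_le (hmeas : ∀ z, Measurable fun ω => Ψ ω z) (hbd : ∀ ω z, Ψ ω z ≤ C)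
    (h : E) (n : ℕ+) :
    expE P C (fun ω => Ψ ω x) + (n : ℝ) * expE P 0 (fun ω => min (horQuot (Ψ ω) x h n) 0)
      ≤ expE P C (fun ω => Ψ ω (x + (n : ℝ) • h)) := by
  rw [← expE_const_mul (by positivity), ← expE_add (fun ω => hbd ω x) (fun ω => ?_)
    (((measurable_horQuot hmeas h n).min measurable_const).const_mul _).aemeasurable]
  · refine expE_mono_ae (ae_of_all _ fun ω => ?_)
    rw [coe_mul_min_horQuot_zero]
    exact EReal.add_min_sub_zero_le (ne_top_of_le_ne_top (EReal.coe_ne_top C) (hbd ω x))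
  · rw [coe_mul_min_horQuot_zero]
    exact min_le_right _ _

lemma expE_le_add_coe_mul (hmeas : ∀ z, Measurable fun ω => Ψ ω z)
    (hconc : ∀ ω, IsConcaveE (Ψ ω)) (hbd : ∀ ω z, Ψ ω z ≤ C) (hx : ∀ᵐ ω ∂P, Ψ ω x ≠ ⊥)
    (h : E) {m k : ℕ+} (hmk : m ≤ k) :
    expE P C (fun ω => Ψ ω (x + (k : ℝ) • h))
      ≤ C + (k : ℝ) * expE P 0 (fun ω => min (horQuot (Ψ ω) x h m) 0) := by
  have hk : (0 : EReal) ≤ ((k : ℝ) : EReal) := EReal.coe_nonneg.2 (by positivity)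
  rw [← expE_const_mul (by positivity), ← expE_const_self (P := P) (C := C),
    ← expE_add (fun _ => le_rfl) (fun ω => mul_nonpos_of_nonneg_of_nonpos hk (min_le_right _ _))
      (((measurable_horQuot hmeas h m).min measurable_const).const_mul _).aemeasurable]
  refine expE_mono_ae ?_
  filter_upwards [hx] with ω hω
  calc Ψ ω (x + (k : ℝ) • h) ≤ C + min (Ψ ω (x + (k : ℝ) • h) - Ψ ω x) 0 :=
        EReal.le_coe_add_min_sub_zero (hbd ω x) (hbd ω _)
    _ = C + (k : ℝ) * min (horQuot (Ψ ω) x h k) 0 := by rw [coe_mul_min_horQuot_zero]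
    _ ≤ C + (k : ℝ) * min (horQuot (Ψ ω) x h m) 0 := by
        gcongr
        exact (hconc ω).antitone_horQuot h hω
          (fun z => ne_top_of_le_ne_top (EReal.coe_ne_top C) (hbd ω z)) hmk

end IntegratedHorizon

theorem stmt6_general {Ω : Type*} [MeasurableSpace Ω] {ι : Type*} [Nonempty ι]
    (P : ι → Measure Ω)
    {d : ℕ} (Ψ : Ω → (Fin d → ℝ) → EReal) (C : ℝ)
    (hmeas : Measurable (Function.uncurry Ψ))
    (hconc : ∀ ω, IsConcaveE (Ψ ω))
    (hbd : ∀ ω z, Ψ ω z ≤ (C : EReal))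
    (h₀ : Fin d → ℝ) (hh₀ : (⨅ i, expE (P i) C (fun ω => Ψ ω h₀)) ≠ ⊥) :
    ∀ h : Fin d → ℝ,
      hor (fun z => ⨅ i, expE (P i) C (fun ω => Ψ ω z)) h₀ h
        = ⨅ i, expE (P i) 0 (fun ω => hor (Ψ ω) h₀ h) := by
  intro h
  have hmeas' : ∀ z, Measurable fun ω => Ψ ω z := fun z =>
    hmeas.comp (measurable_id.prodMk measurable_const)
  obtain ⟨r, hr⟩ : ∃ r : ℝ, ⨅ i, expE (P i) C (fun ω => Ψ ω h₀) = r :=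
    ⟨_, (EReal.coe_toReal (ne_top_of_le_ne_top (EReal.coe_ne_top C)
      ((iInf_le _ (Classical.arbitrary ι)).trans expE_le_coe)) hh₀).symm⟩
  have hr_le : ∀ i, (r : EReal) ≤ expE (P i) C (fun ω => Ψ ω h₀) := fun i => hr ▸ iInf_le _ i
  have hae : ∀ i, ∀ᵐ ω ∂P i, Ψ ω h₀ ≠ ⊥ := fun i => ae_ne_bot_of_expE_ne_bot
    (hmeas' h₀).aemeasurable (ne_bot_of_le_ne_bot (EReal.coe_ne_bot r) (hr_le i))
  calc hor (fun z => ⨅ i, expE (P i) C (fun ω => Ψ ω z)) h₀ h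
      = ⨅ (n : ℕ+) (i), ((n : ℝ)⁻¹ : EReal)
          * (expE (P i) C (fun ω => Ψ ω (h₀ + (n : ℝ) • h)) - r) := by
        simp only [hor, hr]
        exact iInf_congr fun n => EReal.inv_mul_iInf_sub (by positivity) r _
    _ = ⨅ (i) (n : ℕ+), ((n : ℝ)⁻¹ : EReal)
          * (expE (P i) C (fun ω => Ψ ω (h₀ + (n : ℝ) • h)) - r) := iInf_comm
    _ = ⨅ i, expE (P i) 0 (fun ω => hor (Ψ ω) h₀ h) := by
        refine iInf_congr fun i => ?_
        rw [expE_hor_eq_iInf hmeas' hconc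
          (fun ω z => ne_top_of_le_ne_top (EReal.coe_ne_top C) (hbd ω z)) (hae i)]
        refine iInf_inv_mul_sub_eq_iInf (C := C) (fun n => ?_)
          (fun m k hmk => expE_le_add_coe_mul hmeas' hconc hbd (hae i) h hmk)
        rw [add_comm]
        exact (add_le_add (hr_le i) le_rfl).trans (expE_add_coe_mul_le hmeas' hbd h n)

/-- for a nonempty family `(Pᵢ)` of probability measures and
`Φ(h) := inf_i E^{Pᵢ}[Ψ(h)]`, one has `Φ^∞(h) = inf_i E^{Pᵢ}[Ψ^∞(h)]`
(horizon functions with base point `h°`). -/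
theorem stmt6 {Ω : Type*} [MeasurableSpace Ω] {ι : Type*} [Nonempty ι]
    (P : ι → Measure Ω) [∀ i, IsProbabilityMeasure (P i)]
    {d : ℕ} (Ψ : Ω → (Fin d → ℝ) → EReal) (C : ℝ)
    (hmeas : Measurable (Function.uncurry Ψ))
    (hconc : ∀ ω, IsConcaveE (Ψ ω))
    (hbd : ∀ ω z, Ψ ω z ≤ (C : EReal))
    (h₀ : Fin d → ℝ) (hh₀ : (⨅ i, expE (P i) C (fun ω => Ψ ω h₀)) ≠ ⊥) :
    ∀ h : Fin d → ℝ,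
      hor (fun z => ⨅ i, expE (P i) C (fun ω => Ψ ω z)) h₀ h
        = ⨅ i, expE (P i) 0 (fun ω => hor (Ψ ω) h₀ h) :=
  stmt6_general P Ψ C hmeas hconc hbd h₀ hh₀
end

section
/- Composition rule for horizon functions: let U : ℝ → ℝ ∪ {-∞} be concave, nondecreasing, nonconstant and upper-semicontinuous, and V : ℝ^n → ℝ concave and upper-semicontinuous with V(ℝ^n) ∩ dom U ≠ ∅. Set Ψ := U ∘ V. Then for every h ∈ ℝ^n: Ψ^∞(h) = U^∞(V^∞(h)) if V^∞(h) > -∞, and Ψ^∞(h) = -∞ otherwise. -/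
open MeasureTheory Filter
open scoped ENNReal

/-!
Write `V (h₀ + k h) = V h₀ + k g_k`. Then the `k`-th difference quotient of `Ψ = U ∘ V` at `h₀`
in direction `h` is the `k`-th difference quotient of `U` at `V h₀` in direction `g_k`, and by
concavity of `V` the slopes `g_k` decrease to `V^∞(h)`. Monotonicity of `U` bounds these
quotients below by those in direction `V^∞(h)`. Conversely, by concavity of `U` its quotients
decrease in `k`, so `Ψ^∞(h)` is at most the `m`-th quotient of `U` in direction `g_n` for all
`n ≥ m`, and upper semicontinuity of `U` lets `n → ∞`. If `V^∞(h) = -∞`, the same bound with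
`m = 1` is `U (V h₀ + g_n) - U (V h₀) → -∞`, since a nonconstant nondecreasing concave function
is unbounded below.
-/

open Topology

namespace EReal

lemma le_inv_mul_sub_iff {k : ℝ} (hk : 0 < k) (c r : ℝ) (e : EReal) :
    (r : EReal) ≤ (k : EReal)⁻¹ * (e - c) ↔ ((k * r + c : ℝ) : EReal) ≤ e := by
  have hk' : (0 : EReal) < (k : EReal)⁻¹ := by rw [← coe_inv]; exact_mod_cast inv_pos.2 hk
  induction e using EReal.rec with
  | bot => simp only [bot_sub, mul_bot_of_pos hk', le_bot_iff, coe_ne_bot]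
  | coe x =>
    rw [← coe_inv, ← coe_sub, ← coe_mul, EReal.coe_le_coe_iff, EReal.coe_le_coe_iff,
      le_inv_mul_iff₀ hk]
    constructor <;> intro <;> linarith
  | top => simp only [top_sub_coe, mul_top_of_pos hk', le_top]

lemma inv_mul_sub_le_iff {k : ℝ} (hk : 0 < k) (c r : ℝ) (e : EReal) :
    (k : EReal)⁻¹ * (e - c) ≤ r ↔ e ≤ ((k * r + c : ℝ) : EReal) := by
  have hk' : (0 : EReal) < (k : EReal)⁻¹ := by rw [← coe_inv]; exact_mod_cast inv_pos.2 hk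
  induction e using EReal.rec with
  | bot => simp only [bot_sub, mul_bot_of_pos hk', bot_le]
  | coe x =>
    rw [← coe_inv, ← coe_sub, ← coe_mul, EReal.coe_le_coe_iff, EReal.coe_le_coe_iff,
      inv_mul_le_iff₀ hk]
    constructor <;> intro <;> linarith
  | top => simp only [top_sub_coe, mul_top_of_pos hk', top_le_iff, coe_ne_top]

lemma inv_mul_sub_lt_iff {k : ℝ} (hk : 0 < k) (c r : ℝ) (e : EReal) :
    (k : EReal)⁻¹ * (e - c) < r ↔ e < ((k * r + c : ℝ) : EReal) := by
  simpa only [not_le] using (le_inv_mul_sub_iff hk c r e).not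

lemma toReal_iInf_coe_le {ι : Sort*} {g : ι → ℝ} (hne : ⨅ k, (g k : EReal) ≠ ⊥) (k : ι) :
    (⨅ k, (g k : EReal)).toReal ≤ g k := by
  have hle : ⨅ k, (g k : EReal) ≤ g k := iInf_le _ k
  rwa [← EReal.coe_le_coe_iff, coe_toReal (ne_top_of_le_ne_top (coe_ne_top _) hle) hne]

end EReal

lemma Antitone.tendsto_toReal_iInf_coe {ι : Type*} [SemilatticeSup ι] [Nonempty ι] {g : ι → ℝ}
    (hg : Antitone g) (hne : ⨅ k, (g k : EReal) ≠ ⊥) :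
    Tendsto g atTop (𝓝 (⨅ k, (g k : EReal)).toReal) := by
  obtain ⟨k⟩ := ‹Nonempty ι›
  have hI : ((⨅ k, (g k : EReal)).toReal : EReal) = ⨅ k, (g k : EReal) :=
    EReal.coe_toReal (ne_top_of_le_ne_top (EReal.coe_ne_top (g k)) (iInf_le _ k)) hne
  rw [← EReal.tendsto_coe, hI]
  exact tendsto_atTop_iInf fun m n hmn => EReal.coe_le_coe_iff.2 (hg hmn)

lemma ConcaveOn.isConcaveE_coe {E : Type*} [AddCommGroup E] [Module ℝ E] {f : E → ℝ}
    (hf : ConcaveOn ℝ Set.univ f) : IsConcaveE (fun x => (f x : EReal)) := by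
  intro x y a b ha hb hab
  have := hf.2 (Set.mem_univ x) (Set.mem_univ y) ha hb hab
  simp only [smul_eq_mul] at this
  simp only [← EReal.coe_mul, ← EReal.coe_add, EReal.coe_le_coe_iff]
  exact this

section DiffQuot

variable {E : Type*} [AddCommGroup E] [Module ℝ E]

noncomputable def diffQuot (f : E → EReal) (x h : E) (k : ℕ+) : EReal :=
  ((k : ℝ) : EReal)⁻¹ * (f (x + (k : ℝ) • h) - f x)

lemma diffQuot_coe (f : E → ℝ) (x h : E) (k : ℕ+) :
    diffQuot (fun z => (f z : EReal)) x h k = ((k : ℝ)⁻¹ * (f (x + (k : ℝ) • h) - f x) : ℝ) := by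
  simp only [diffQuot, EReal.coe_mul, EReal.coe_sub, EReal.coe_inv]

lemma IsConcaveE.antitone_diffQuot {f : E → EReal} (hf : IsConcaveE f) (htop : ∀ z, f z ≠ ⊤)
    {x : E} (hx : f x ≠ ⊥) (h : E) : Antitone (diffQuot f x h) := by
  obtain ⟨c, hc⟩ : ∃ c : ℝ, f x = c := ⟨_, (EReal.coe_toReal (htop x) hx).symm⟩
  intro m n hmn
  have hm : (0 : ℝ) < m := by exact_mod_cast m.pos
  have hn : (0 : ℝ) < n := by exact_mod_cast n.pos
  have hmn' : (m : ℝ) ≤ n := by exact_mod_cast hmn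
  simp only [diffQuot, hc]
  rcases eq_or_ne (f (x + (n : ℝ) • h)) ⊥ with hbot | hbot
  · have hn' : (0 : EReal) < ((n : ℝ) : EReal)⁻¹ := by
      rw [← EReal.coe_inv]; exact_mod_cast inv_pos.2 hn
    rw [hbot, EReal.bot_sub, EReal.mul_bot_of_pos hn']
    exact bot_le
  obtain ⟨u, hu⟩ : ∃ u : ℝ, f (x + (n : ℝ) • h) = u := ⟨_, (EReal.coe_toReal (htop _) hbot).symm⟩
  rw [hu, ← EReal.coe_sub, ← EReal.coe_inv, ← EReal.coe_mul, EReal.le_inv_mul_sub_iff hm]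
  have hseg := hf (x + (n : ℝ) • h) x (m / n) (1 - m / n) (by positivity)
    (sub_nonneg.2 ((div_le_one hn).2 hmn')) (by ring)
  have hpt : ((m : ℝ) / n) • (x + (n : ℝ) • h) + (1 - (m : ℝ) / n) • x = x + (m : ℝ) • h := by
    rw [smul_add, smul_smul, div_mul_cancel₀ _ hn.ne']
    module
  rw [hpt, hu, hc] at hseg
  convert hseg using 1
  norm_cast
  field_simp
  ring

lemma diffQuot_mono_of_monotone {U : ℝ → EReal} (hU : Monotone U) (y : ℝ) (k : ℕ+) :
    Monotone fun d => diffQuot U y d k := by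
  intro a b hab
  have hk : (0 : ℝ) ≤ k := by positivity
  refine mul_le_mul_of_nonneg_left (EReal.sub_le_sub (hU ?_) le_rfl) ?_
  · simp only [smul_eq_mul]; gcongr
  · rw [← EReal.coe_inv]; exact_mod_cast inv_nonneg.2 hk

end DiffQuot

lemma UpperSemicontinuous.diffQuot_le_of_tendsto {U : ℝ → EReal} (hU : UpperSemicontinuous U)
    {y : ℝ} (hy : U y ≠ ⊥) (hy' : U y ≠ ⊤) (m : ℕ+) {ι : Type*} {l : Filter ι} [l.NeBot]
    {d : ι → ℝ} {a : ℝ} (hd : Tendsto d l (𝓝 a)) {B : EReal}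
    (hB : ∀ᶠ i in l, B ≤ diffQuot U y (d i) m) : B ≤ diffQuot U y a m := by
  obtain ⟨c, hc⟩ : ∃ c : ℝ, U y = c := ⟨_, (EReal.coe_toReal hy' hy).symm⟩
  have hm : (0 : ℝ) < m := by exact_mod_cast m.pos
  by_contra! hlt
  obtain ⟨r, har, hrB⟩ := EReal.lt_iff_exists_real_btwn.1 hlt
  simp only [diffQuot, hc] at har hB
  rw [EReal.inv_mul_sub_lt_iff hm] at har
  have hev : ∀ᶠ i in l, U (y + (m : ℝ) • d i) < ((m * r + c : ℝ) : EReal) :=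
    ((hd.const_smul (m : ℝ)).const_add y).eventually (hU _ _ har)
  obtain ⟨i, hi, hBi⟩ := (hev.and hB).exists
  rw [← EReal.inv_mul_sub_lt_iff hm] at hi
  exact lt_asymm (hBi.trans_lt hi) hrB

lemma IsConcaveE.exists_lt_of_monotone {U : ℝ → EReal} (hU : IsConcaveE U)
    (hmono : Monotone U) (htop : ∀ t, U t ≠ ⊤) (hnc : ∃ a b, U a ≠ U b) (r : ℝ) :
    ∃ t, U t < r := by
  obtain ⟨p, q, hpq, hUpq⟩ : ∃ p q : ℝ, p < q ∧ U p < U q := by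
    obtain ⟨a, b, hab⟩ := hnc
    rcases lt_or_gt_of_ne (fun h : a = b => hab (congrArg U h)) with h | h
    · exact ⟨a, b, h, (hmono h.le).lt_of_ne hab⟩
    · exact ⟨b, a, h, (hmono h.le).lt_of_ne hab.symm⟩
  rcases eq_or_ne (U p) ⊥ with hp | hp
  · exact ⟨p, hp ▸ EReal.bot_lt_coe r⟩
  obtain ⟨u, hu⟩ : ∃ u : ℝ, U p = u := ⟨_, (EReal.coe_toReal (htop p) hp).symm⟩
  have hq : U q ≠ ⊥ := (hUpq.trans_le' bot_le).ne'
  obtain ⟨v, hv⟩ : ∃ v : ℝ, U q = v := ⟨_, (EReal.coe_toReal (htop q) hq).symm⟩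
  have huv : u < v := by rw [hu, hv] at hUpq; exact_mod_cast hUpq
  -- concavity makes `U` decrease at least linearly, with slope `v - u`, along `q + k (p - q)`
  obtain ⟨n, hn⟩ := exists_nat_gt ((v - r) / (v - u))
  have hslope := hU.antitone_diffQuot htop hq (p - q) (one_le (a := n.succPNat))
  have hone : diffQuot U q (p - q) 1 = ((1 : ℝ) : EReal)⁻¹ * (U p - v) := by
    simp only [diffQuot, PNat.one_coe, Nat.cast_one, one_smul, add_sub_cancel, hv]
  rw [hone, hu, ← EReal.coe_sub, ← EReal.coe_inv, ← EReal.coe_mul, inv_one, one_mul, diffQuot,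
    hv, EReal.inv_mul_sub_le_iff (by positivity)] at hslope
  refine ⟨q + (n.succPNat : ℝ) • (p - q), hslope.trans_lt (EReal.coe_lt_coe_iff.2 ?_)⟩
  rw [div_lt_iff₀ (by linarith)] at hn
  simp only [Nat.succPNat_coe, Nat.cast_succ]
  nlinarith

section Composition

variable {U : ℝ → EReal} (hU : IsConcaveE U) (htop : ∀ t, U t ≠ ⊤) {y : ℝ} (hy : U y ≠ ⊥)
  {g : ℕ+ → ℝ}
include hU htop hy

lemma iInf_diffQuot_comp_le {m n : ℕ+} (hmn : m ≤ n) :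
    ⨅ k, diffQuot U y (g k) k ≤ diffQuot U y (g n) m :=
  (iInf_le _ n).trans (hU.antitone_diffQuot htop hy (g n) hmn)

lemma iInf_diffQuot_comp_eq_hor (hmono : Monotone U) (husc : UpperSemicontinuous U) {a : ℝ}
    (hga : Tendsto g atTop (𝓝 a)) (hag : ∀ k, a ≤ g k) :
    ⨅ k, diffQuot U y (g k) k = hor U y a :=
  le_antisymm
    (le_iInf fun m => husc.diffQuot_le_of_tendsto hy (htop y) m hga
      ((eventually_ge_atTop m).mono fun _ => iInf_diffQuot_comp_le hU htop hy))
    (le_iInf fun k => iInf_le_of_le k (diffQuot_mono_of_monotone hmono y k (hag k)))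

lemma iInf_diffQuot_comp_eq_bot (hmono : Monotone U) (hnc : ∃ a b, U a ≠ U b)
    (hg : ∀ r : ℝ, ∃ k, g k < r) : ⨅ k, diffQuot U y (g k) k = ⊥ := by
  obtain ⟨c, hc⟩ : ∃ c : ℝ, U y = c := ⟨_, (EReal.coe_toReal (htop y) hy).symm⟩
  refine (EReal.eq_bot_iff_forall_lt _).2 fun r => ?_
  obtain ⟨t, ht⟩ := hU.exists_lt_of_monotone hmono htop hnc (1 * r + c)
  obtain ⟨n, hn⟩ := hg (t - y)
  refine (iInf_diffQuot_comp_le hU htop hy (one_le (a := n))).trans_lt ?_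
  rw [diffQuot, hc, PNat.one_coe, Nat.cast_one, EReal.inv_mul_sub_lt_iff one_pos]
  refine lt_of_le_of_lt (hmono ?_) ht
  rw [one_smul]
  linarith

end Composition

theorem stmt12_general {n : ℕ} (U : ℝ → EReal)
    (hUconc : IsConcaveE U) (hUmono : Monotone U)
    (hUnonconst : ∃ a b : ℝ, U a ≠ U b)
    (hUusc : UpperSemicontinuous U) (hUne_top : ∀ y, U y ≠ ⊤)
    (V : (Fin n → ℝ) → ℝ) (hVconc : ConcaveOn ℝ Set.univ V)
    (h₀ : Fin n → ℝ) (hprop : U (V h₀) ≠ ⊥) :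
    ∀ h : Fin n → ℝ,
      (hor (fun z => ((V z : ℝ) : EReal)) h₀ h ≠ ⊥ →
        hor (fun z => U (V z)) h₀ h
          = hor U (V h₀) ((hor (fun z => ((V z : ℝ) : EReal)) h₀ h).toReal)) ∧
      (hor (fun z => ((V z : ℝ) : EReal)) h₀ h = ⊥ →
        hor (fun z => U (V z)) h₀ h = ⊥) := by
  intro h
  set g : ℕ+ → ℝ := fun k => (k : ℝ)⁻¹ * (V (h₀ + (k : ℝ) • h) - V h₀)
  have hVg : hor (fun z => (V z : EReal)) h₀ h = ⨅ k, (g k : EReal) :=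
    iInf_congr (diffQuot_coe V h₀ h)
  have hΨ : hor (fun z => U (V z)) h₀ h = ⨅ k, diffQuot U (V h₀) (g k) k := by
    refine iInf_congr fun k => ?_
    have hk : (k : ℝ) ≠ 0 := by positivity
    simp only [diffQuot, g, smul_eq_mul, mul_inv_cancel_left₀ hk, add_sub_cancel]
  have hg : Antitone g := fun m k hmk => by
    simpa only [diffQuot_coe, EReal.coe_le_coe_iff] using
      hVconc.isConcaveE_coe.antitone_diffQuot (fun _ => EReal.coe_ne_top _)
        (EReal.coe_ne_bot _) h hmk
  rw [hVg, hΨ]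
  refine ⟨fun hne => ?_, fun hbot => ?_⟩
  · exact iInf_diffQuot_comp_eq_hor hUconc hUne_top hprop hUmono hUusc
      (hg.tendsto_toReal_iInf_coe hne) (EReal.toReal_iInf_coe_le hne)
  · exact iInf_diffQuot_comp_eq_bot hUconc hUne_top hprop hUmono hUnonconst fun r =>
      (iInf_lt_iff.1 (hbot ▸ EReal.bot_lt_coe r)).imp fun _ => EReal.coe_lt_coe_iff.1

/-- composition rule for horizon functions: with `Ψ := U ∘ V`,
`Ψ^∞(h) = U^∞(V^∞(h))` whenever `V^∞(h) > -∞`, and `Ψ^∞(h) = -∞` otherwise.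
Horizon functions are taken with base points `h₀` (resp. `V h₀`), where
`U (V h₀) ≠ -∞` witnesses `V(ℝ^n) ∩ dom U ≠ ∅`. -/
theorem stmt12 {n : ℕ} (U : ℝ → EReal)
    (hUconc : IsConcaveE U) (hUmono : Monotone U)
    (hUnonconst : ∃ a b : ℝ, U a ≠ U b)
    (hUusc : UpperSemicontinuous U) (hUne_top : ∀ y, U y ≠ ⊤)
    (V : (Fin n → ℝ) → ℝ) (hVconc : ConcaveOn ℝ Set.univ V)
    (hVusc : UpperSemicontinuous V)
    (h₀ : Fin n → ℝ) (hprop : U (V h₀) ≠ ⊥) :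
    ∀ h : Fin n → ℝ,
      (hor (fun z => ((V z : ℝ) : EReal)) h₀ h ≠ ⊥ →
        hor (fun z => U (V z)) h₀ h
          = hor U (V h₀) ((hor (fun z => ((V z : ℝ) : EReal)) h₀ h).toReal)) ∧
      (hor (fun z => ((V z : ℝ) : EReal)) h₀ h = ⊥ →
        hor (fun z => U (V z)) h₀ h = ⊥) :=
  stmt12_general U hUconc hUmono hUnonconst hUusc hUne_top V hVconc h₀ hprop
end
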